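/- Let R_1, R_2, …, R_{n+1} be exchangeable real random variables, let R_{(1)} ≤ ⋯ ≤ R_{(n)} denote the order statistics of {R_1,…,R_n}, and let 0 < α < 1 satisfy ⌈(1−α)(n+1)⌉ ≤ n. Then Pr( R_{n+1} ≤ R_{(⌈(1−α)(n+1)⌉)} ) ≥ 1 − α. -/

import Mathlib

open MeasureTheory Finset

/-- The `k`-th order statistic (0-indexed) of the finite tuple `u`: the values of `u`
arranged in nondecreasing order (ties allowed), evaluated at position `k`. -/
noncomputable def orderStat {n : ℕ} (u : Fin n → ℝ) (k : Fin n) : ℝ :=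
  u (Tuple.sort u k)

lemma card_filter_comp_perm {m : ℕ} (P : Fin m → Prop) [DecidablePred P]
    (σ : Equiv.Perm (Fin m)) :
    (univ.filter fun i => P (σ i)).card = (univ.filter P).card := by
  apply Finset.card_bij (fun i _ => σ i)
  · intro a ha; simp_all
  · intro a _ b _ h; exact σ.injective h
  · intro b hb; exact ⟨σ.symm b, by simp_all⟩

lemma count_lt_sort_le {m : ℕ} (x : Fin m → ℝ) (p : Fin m) :
    (univ.filter fun i => x i < x (Tuple.sort x p)).card ≤ p.val := by
  rw [← card_filter_comp_perm (fun i => x i < x (Tuple.sort x p)) (Tuple.sort x)]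
  calc (univ.filter fun q => x (Tuple.sort x q) < x (Tuple.sort x p)).card
      ≤ (Finset.Iio p).card := by
        apply Finset.card_le_card
        intro q hq
        simp only [Finset.mem_filter, Finset.mem_univ, true_and] at hq
        simp only [Finset.mem_Iio]
        by_contra h
        exact absurd (Tuple.monotone_sort x (not_lt.mp h)) (not_le.mpr hq)
    _ = p.val := Fin.card_Iio p

lemma le_orderStat_of_count {m : ℕ} (u : Fin m → ℝ) (t : ℝ) (k : ℕ) (hk : k ≤ m) (hk0 : 0 < k)
    (h : (univ.filter fun i => u i < t).card < k) :
    t ≤ orderStat u ⟨k - 1, by omega⟩ := by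
  by_contra h'
  push_neg at h'
  have hsub : ((Finset.range k).attach.image
      (fun p => Tuple.sort u ⟨p.1, by have := Finset.mem_range.mp p.2; omega⟩))
      ⊆ univ.filter fun i => u i < t := by
    intro j hj
    simp only [Finset.mem_image, Finset.mem_attach, true_and, Subtype.exists] at hj
    obtain ⟨p, hp, rfl⟩ := hj
    have hp' := Finset.mem_range.mp hp
    simp only [Finset.mem_filter, Finset.mem_univ, true_and]
    calc u (Tuple.sort u ⟨p, by omega⟩) ≤ u (Tuple.sort u ⟨k - 1, by omega⟩) :=
          Tuple.monotone_sort u (by simp [Fin.le_def]; omega)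
      _ < t := h'
  have hcard : ((Finset.range k).attach.image
      (fun p : {x // x ∈ Finset.range k} =>
        Tuple.sort u ⟨p.1, by have := Finset.mem_range.mp p.2; omega⟩)).card = k := by
    rw [Finset.card_image_of_injective _ ?_, Finset.card_attach, Finset.card_range]
    intro a b hab
    have := (Tuple.sort u).injective hab
    exact Subtype.ext (by simpa [Fin.mk.injEq] using this)
  have := Finset.card_le_card hsub
  rw [hcard] at this
  omega

lemma count_small_ranks {m : ℕ} (x : Fin m → ℝ) (k : ℕ) (hk : k ≤ m) :
    k ≤ (univ.filter fun j => (univ.filter fun i => x i < x j).card < k).card := by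
  have hsub : ((Finset.range k).attach.image
      (fun p : {x // x ∈ Finset.range k} =>
        Tuple.sort x ⟨p.1, by have := Finset.mem_range.mp p.2; omega⟩))
      ⊆ univ.filter fun j => (univ.filter fun i => x i < x j).card < k := by
    intro j hj
    simp only [Finset.mem_image, Finset.mem_attach, true_and, Subtype.exists] at hj
    obtain ⟨p, hp, rfl⟩ := hj
    have hp' := Finset.mem_range.mp hp
    simp only [Finset.mem_filter, Finset.mem_univ, true_and]
    calc (univ.filter fun i => x i < x (Tuple.sort x ⟨p, by omega⟩)).card
        ≤ p := count_lt_sort_le x ⟨p, by omega⟩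
      _ < k := hp'
  have hcard : ((Finset.range k).attach.image
      (fun p : {x // x ∈ Finset.range k} =>
        Tuple.sort x ⟨p.1, by have := Finset.mem_range.mp p.2; omega⟩)).card = k := by
    rw [Finset.card_image_of_injective _ ?_, Finset.card_attach, Finset.card_range]
    intro a b hab
    have := (Tuple.sort x).injective hab
    exact Subtype.ext (by simpa [Fin.mk.injEq] using this)
  have := Finset.card_le_card hsub
  omega


open Finset ENNReal in
/-- Let `R_1, …, R_{n+1}` be exchangeable real random variables, let
`R_{(1)} ≤ ⋯ ≤ R_{(n)}` be the order statistics of `R_1, …, R_n`, and let `0 < α < 1`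
satisfy `⌈(1−α)(n+1)⌉ ≤ n`.  Then `Pr( R_{n+1} ≤ R_{(⌈(1−α)(n+1)⌉)} ) ≥ 1 − α`.
(The 1-based rank `⌈(1−α)(n+1)⌉` corresponds to the 0-based index
`⌈(1−α)(n+1)⌉ − 1`.) -/
theorem conformal_coverage_of_exchangeable
    {Ω : Type*} [MeasurableSpace Ω] (μ : Measure Ω) [IsProbabilityMeasure μ]
    {n : ℕ} (R : Fin (n + 1) → Ω → ℝ) (hR : ∀ i, Measurable (R i))
    (hexch : ∀ σ : Equiv.Perm (Fin (n + 1)),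
      Measure.map (fun ω => fun i => R (σ i) ω) μ = Measure.map (fun ω => fun i => R i ω) μ)
    (α : ℝ) (hα0 : 0 < α) (hα1 : α < 1)
    (hceil : ⌈(1 - α) * (n + 1 : ℝ)⌉₊ ≤ n) :
    1 - α ≤ (μ {ω | R (Fin.last n) ω ≤
        orderStat (fun i : Fin n => R i.castSucc ω)
          ⟨⌈(1 - α) * (n + 1 : ℝ)⌉₊ - 1, by
            have h1 : 0 < ⌈(1 - α) * (n + 1 : ℝ)⌉₊ :=
              Nat.ceil_pos.mpr (mul_pos (by linarith) (by positivity))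
            omega⟩}).toReal := by
  classical
  set k := ⌈(1 - α) * (n + 1 : ℝ)⌉₊ with hk_def
  have hk0 : 0 < k := Nat.ceil_pos.mpr (mul_pos (by linarith) (by positivity))
  set T : Ω → (Fin (n+1) → ℝ) := fun ω i => R i ω with hT
  have hTmeas : Measurable T := measurable_pi_lambda _ hR
  set ν := Measure.map T μ with hν
  haveI : IsProbabilityMeasure ν := Measure.isProbabilityMeasure_map hTmeas.aemeasurable
  set f : Fin (n+1) → (Fin (n+1) → ℝ) → ℕ :=
    fun j x => (univ.filter fun i => x i < x j).card with hf
  have hfmeas : ∀ j, Measurable (f j) := by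
    intro j
    have hfe : f j = fun x => ∑ i, if x i < x j then 1 else 0 := by
      funext x; exact Finset.card_filter _ _
    rw [hfe]
    exact Finset.measurable_sum _ fun i _ =>
      Measurable.ite (measurableSet_lt (measurable_pi_apply i) (measurable_pi_apply j))
        measurable_const measurable_const
  set S : Fin (n+1) → Set (Fin (n+1) → ℝ) := fun j => {x | f j x < k} with hS
  have hSmeas : ∀ j, MeasurableSet (S j) := fun j =>
    (hfmeas j) (show MeasurableSet {m : ℕ | m < k} by trivial)
  -- all measures equal
  have hSeq : ∀ j, ν (S j) = ν (S (Fin.last n)) := by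
    intro j
    set σ := Equiv.swap j (Fin.last n) with hσ
    set F : (Fin (n+1) → ℝ) → (Fin (n+1) → ℝ) := fun x i => x (σ i) with hF
    have hFmeas : Measurable F := measurable_pi_lambda _ fun i => measurable_pi_apply _
    have hmapF : Measure.map F ν = ν := by
      rw [hν, Measure.map_map hFmeas hTmeas]
      exact hexch σ
    have hpre : F ⁻¹' (S (Fin.last n)) = S j := by
      ext x
      have h1 : σ (Fin.last n) = j := Equiv.swap_apply_right _ _
      show f (Fin.last n) (F x) < k ↔ f j x < k
      have h2 : f (Fin.last n) (F x) = f j x := by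
        show (univ.filter fun i => x (σ i) < x (σ (Fin.last n))).card
            = (univ.filter fun i => x i < x j).card
        simp only [h1]
        exact card_filter_comp_perm (fun i => x i < x j) σ
      rw [h2]
    calc ν (S j) = ν (F ⁻¹' (S (Fin.last n))) := by rw [hpre]
      _ = (Measure.map F ν) (S (Fin.last n)) :=
          (Measure.map_apply hFmeas (hSmeas (Fin.last n))).symm
      _ = ν (S (Fin.last n)) := by rw [hmapF]
  -- sum lower bound
  have hsum : (k : ℝ≥0∞) ≤ ∑ j, ν (S j) := by
    have h1 : ∀ j : Fin (n+1), ν (S j) = ∫⁻ x, (S j).indicator 1 x ∂ν := fun j =>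
      (lintegral_indicator_one (hSmeas j)).symm
    calc (k : ℝ≥0∞) = ∫⁻ _, (k : ℝ≥0∞) ∂ν := by simp
      _ ≤ ∫⁻ x, ∑ j, (S j).indicator 1 x ∂ν := by
          apply lintegral_mono
          intro x
          have hind : ∀ j, (S j).indicator (1 : (Fin (n+1) → ℝ) → ℝ≥0∞) x
              = if f j x < k then 1 else 0 := by
            intro j
            by_cases h : f j x < k
            · have hx : x ∈ S j := h
              rw [Set.indicator_of_mem hx, if_pos h]; rfl
            · have hx : x ∉ S j := h
              rw [Set.indicator_of_notMem hx, if_neg h]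
          have hpt : ∑ j, (S j).indicator (1 : (Fin (n+1) → ℝ) → ℝ≥0∞) x
              = ((univ.filter fun j => f j x < k).card : ℝ≥0∞) := by
            rw [Finset.sum_congr rfl (fun j _ => hind j), Finset.sum_boole]
          show (k : ℝ≥0∞) ≤ ∑ j, (S j).indicator 1 x
          rw [hpt]
          exact_mod_cast Nat.cast_le.mpr (count_small_ranks x k (by omega))
      _ = ∑ j, ν (S j) := by
          rw [lintegral_finset_sum]
          · exact Finset.sum_congr rfl fun j _ => (h1 j).symm
          · exact fun j _ => (measurable_const.indicator (hSmeas j))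
  have hsum' : (k : ℝ≥0∞) ≤ (n + 1 : ℕ) * ν (S (Fin.last n)) := by
    calc (k : ℝ≥0∞) ≤ ∑ j, ν (S j) := hsum
      _ = ∑ _j : Fin (n+1), ν (S (Fin.last n)) := Finset.sum_congr rfl fun j _ => hSeq j
      _ = (n + 1 : ℕ) * ν (S (Fin.last n)) := by
          rw [Finset.sum_const, Finset.card_univ, Fintype.card_fin, nsmul_eq_mul]
  -- event inclusion
  set E := {ω | R (Fin.last n) ω ≤
      orderStat (fun i : Fin n => R i.castSucc ω) ⟨k - 1, by omega⟩} with hE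
  have hincl : T ⁻¹' (S (Fin.last n)) ⊆ E := by
    intro ω hω
    have hω' : f (Fin.last n) (T ω) < k := hω
    have hcount : (univ.filter fun i : Fin n => R i.castSucc ω < R (Fin.last n) ω).card < k := by
      refine lt_of_le_of_lt ?_ hω'
      apply Finset.card_le_card_of_injOn (fun i => i.castSucc)
      · intro i hi
        simp only [Finset.coe_filter, Finset.mem_coe, Set.mem_setOf_eq, Finset.mem_filter, Finset.mem_univ, true_and] at hi ⊢
        exact hi
      · intro a _ b _ h; exact Fin.castSucc_injective _ h
    exact le_orderStat_of_count _ _ k hceil hk0 hcount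
  have hνE : ν (S (Fin.last n)) ≤ μ E := by
    rw [hν, Measure.map_apply hTmeas (hSmeas (Fin.last n))]
    exact measure_mono hincl
  -- arithmetic
  have hE1 : μ E ≤ 1 := prob_le_one
  have hfin : ((n + 1 : ℕ) : ℝ≥0∞) * μ E ≠ ⊤ :=
    ENNReal.mul_ne_top (by simp) (lt_of_le_of_lt hE1 ENNReal.one_lt_top).ne
  have hle : (k : ℝ≥0∞) ≤ ((n + 1 : ℕ) : ℝ≥0∞) * μ E :=
    hsum'.trans (mul_le_mul_right hνE _)
  have hreal : (k : ℝ) ≤ ((n + 1 : ℕ) : ℝ) * (μ E).toReal := by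
    have h := ENNReal.toReal_mono hfin hle
    rwa [ENNReal.toReal_natCast, ENNReal.toReal_mul, ENNReal.toReal_natCast] at h
  have hceil' : (1 - α) * (n + 1 : ℝ) ≤ k := Nat.le_ceil _
  have hn : (0:ℝ) < (n : ℝ) + 1 := by positivity
  push_cast at hreal
  nlinarith [hreal, hceil']
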